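/- A 3-dicritical digraph does not contain O5 as a subdigraph, where O5 is the oriented graph on five vertices u, v, x, y, z whose arcs are the directed triangle x→y→z→x, the arcs u→x, u→y, u→z, the arcs x→v, y→v, z→v, and the arc u→v. -/

import Mathlib

/-- A (loopless, simple) digraph on vertex type `V`. -/
structure SimpleDigraph (V : Type) where
  Adj : V → V → Prop
  loopless : ∀ v, ¬ Adj v v

namespace SimpleDigraph

/-- A set of arcs (given as a relation) is acyclic if it admits no directed closed walk. -/
def AcyclicRel {V : Type} (A : V → V → Prop) : Prop :=
  ∀ v, ¬ Relation.TransGen A v v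

/-- A set of arcs is 2-dicolourable if the vertices can be coloured with two colours
so that each colour class induces an acyclic subdigraph. -/
def Dicolourable2Rel {V : Type} (A : V → V → Prop) : Prop :=
  ∃ φ : V → Fin 2, ∀ i : Fin 2,
    AcyclicRel (fun a b => A a b ∧ φ a = i ∧ φ b = i)

/-- A digraph is 2-dicolourable if its vertices can be coloured with two colours
so that each colour class induces an acyclic subdigraph. -/
def Dicolourable2 {V : Type} (D : SimpleDigraph V) : Prop :=
  Dicolourable2Rel D.Adj

/-- `(S, A)` describes a subdigraph of `D`: its vertex set is `S` and its arcs
are given by `A`, which must join vertices of `S` and be arcs of `D`. -/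
def IsSubdigraphOn {V : Type} (D : SimpleDigraph V) (S : Set V) (A : V → V → Prop) : Prop :=
  ∀ u v, A u v → u ∈ S ∧ v ∈ S ∧ D.Adj u v

/-- `D` is 3-dicritical: `D` is not 2-dicolourable, but every proper subdigraph of `D`
(one missing a vertex or an arc) is 2-dicolourable. -/
def Dicritical3 {V : Type} (D : SimpleDigraph V) : Prop :=
  ¬ D.Dicolourable2 ∧
    ∀ (S : Set V) (A : V → V → Prop), D.IsSubdigraphOn S A →
      (S ≠ Set.univ ∨ A ≠ D.Adj) → Dicolourable2Rel A

/-- A digraph is semi-complete if any two distinct vertices are joined by at least one arc. -/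
def SemiComplete {V : Type} (D : SimpleDigraph V) : Prop :=
  ∀ u v : V, u ≠ v → D.Adj u v ∨ D.Adj v u

/-- A tournament is a semi-complete digraph with no digon. -/
def IsTournament {V : Type} (D : SimpleDigraph V) : Prop :=
  D.SemiComplete ∧ ∀ u v : V, ¬ (D.Adj u v ∧ D.Adj v u)

/-- Isomorphism of digraphs. -/
def Iso {V W : Type} (D : SimpleDigraph V) (E : SimpleDigraph W) : Prop :=
  ∃ e : V ≃ W, ∀ u v : V, D.Adj u v ↔ E.Adj (e u) (e v)

/-- `D` contains (a copy of) `H` as a subdigraph. -/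
def ContainsSub {V W : Type} (D : SimpleDigraph V) (H : SimpleDigraph W) : Prop :=
  ∃ f : W → V, Function.Injective f ∧ ∀ a b, H.Adj a b → D.Adj (f a) (f b)

/-- `D` contains (a copy of) `H` as an induced subdigraph. -/
def ContainsInduced {V W : Type} (D : SimpleDigraph V) (H : SimpleDigraph W) : Prop :=
  ∃ f : W → V, Function.Injective f ∧ ∀ a b, H.Adj a b ↔ D.Adj (f a) (f b)

end SimpleDigraph

/-- The oriented graph `O5` on vertices `u = 0`, `v = 1`, `x = 2`, `y = 3`, `z = 4`:
the directed triangle `x → y → z → x`, the arcs `u → x, u → y, u → z`,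
the arcs `x → v, y → v, z → v`, and the arc `u → v`. -/
def digraphO5 : SimpleDigraph (Fin 5) :=
  ⟨fun a b => (a.val, b.val) ∈
      [(2,3),(3,4),(4,2),(0,2),(0,3),(0,4),(2,1),(3,1),(4,1),(0,1)], by decide⟩

/-!
Delete the arc `u → v` of a copy of `O5` in a 3-dicritical digraph `D` and take a
2-dicolouring `φ` of what remains. As `D` itself is not 2-dicolourable, some monochromatic
cycle of `D` uses `u → v`, so `u` and `v` get the same colour `i` and are joined by a path
`v ⇝ u` of colour `i` avoiding `u → v`. A vertex `w` with `u → w → v` of colour `i` would close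
this path into a monochromatic cycle `u → w → v ⇝ u` avoiding `u → v`, so all such vertices get
the other colour. Hence they induce an acyclic subdigraph, which the triangle `x → y → z → x`
is not.
-/

open Relation

lemma Relation.TransGen.of_or_of_subsingleton_arc {α : Type*} {R S : α → α → Prop} {a b x y : α}
    (hS : ∀ p q, S p q → p = a ∧ q = b) (h : TransGen (fun p q => R p q ∨ S p q) x y) :
    TransGen R x y ∨ (S a b ∧ ReflTransGen R x a ∧ ReflTransGen R b y) := by
  induction h with
  | single h =>
    rcases h with h | h
    · exact .inl (.single h)
    · obtain ⟨rfl, rfl⟩ := hS _ _ h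
      exact .inr ⟨h, .refl, .refl⟩
  | tail _ hstep ih =>
    rcases hstep with h | h
    · rcases ih with hxy | ⟨hab, hxa, hby⟩
      · exact .inl (hxy.tail h)
      · exact .inr ⟨hab, hxa, hby.tail h⟩
    · obtain ⟨rfl, rfl⟩ := hS _ _ h
      rcases ih with hxy | ⟨-, hxa, -⟩
      · exact .inr ⟨h, hxy.to_reflTransGen, .refl⟩
      · exact .inr ⟨h, hxa, .refl⟩

lemma Fin.two_eq_of_ne_of_ne {i a b : Fin 2} (ha : a ≠ i) (hb : b ≠ i) : a = b := by
  omega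

namespace SimpleDigraph

variable {V : Type}

def colourClass (A : V → V → Prop) (φ : V → Fin 2) (i : Fin 2) : V → V → Prop :=
  fun a b => A a b ∧ φ a = i ∧ φ b = i

def deleteArc (A : V → V → Prop) (u v : V) : V → V → Prop :=
  fun a b => A a b ∧ ¬(a = u ∧ b = v)

lemma Dicritical3.dicolourable2Rel_deleteArc {D : SimpleDigraph V} (hD : D.Dicritical3)
    {u v : V} (huv : D.Adj u v) : Dicolourable2Rel (deleteArc D.Adj u v) := by
  refine hD.2 Set.univ _ (fun a b h => ⟨trivial, trivial, h.1⟩) (.inr fun h => ?_)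
  exact (congrFun₂ h u v ▸ huv).2 ⟨rfl, rfl⟩

lemma Dicritical3.exists_monochromatic_path {D : SimpleDigraph V} (hD : D.Dicritical3)
    {u v : V} (huv : D.Adj u v) :
    ∃ φ : V → Fin 2, (∀ i, AcyclicRel (colourClass (deleteArc D.Adj u v) φ i)) ∧
      φ u = φ v ∧ ReflTransGen (colourClass (deleteArc D.Adj u v) φ (φ u)) v u := by
  obtain ⟨φ, hφ⟩ := hD.dicolourable2Rel_deleteArc huv
  obtain ⟨i, w, hcycle⟩ : ∃ i w, TransGen (colourClass D.Adj φ i) w w := by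
    by_contra! h
    exact hD.1 ⟨φ, fun i w => h i w⟩
  have hsplit : ∀ p q, colourClass D.Adj φ i p q →
      colourClass (deleteArc D.Adj u v) φ i p q ∨ (p = u ∧ q = v ∧ φ p = i ∧ φ q = i) := by
    rintro p q ⟨hpq, hp, hq⟩
    by_cases harc : p = u ∧ q = v
    · exact .inr ⟨harc.1, harc.2, hp, hq⟩
    · exact .inl ⟨⟨hpq, harc⟩, hp, hq⟩
  rcases (TransGen.mono hsplit _ _ hcycle).of_or_of_subsingleton_arc
      (fun p q h => ⟨h.1, h.2.1⟩) with hcycle' | ⟨⟨-, -, hu, hv⟩, hwu, hvw⟩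
  · exact absurd hcycle' (hφ i w)
  · exact ⟨φ, hφ, hu.trans hv.symm, hu ▸ hvw.trans hwu⟩

lemma Dicritical3.acyclicRel_between {D : SimpleDigraph V} (hD : D.Dicritical3) {u v : V}
    (huv : D.Adj u v) :
    AcyclicRel (fun a b => D.Adj a b ∧ (D.Adj u a ∧ D.Adj a v) ∧ (D.Adj u b ∧ D.Adj b v)) := by
  obtain ⟨φ, hφ, hcol, hpath⟩ := hD.exists_monochromatic_path huv
  have hne_u : ∀ {a}, D.Adj u a → a ≠ u := fun h hau => D.loopless u (hau ▸ h)
  have hne_v : ∀ {a}, D.Adj a v → a ≠ v := fun h hav => D.loopless v (hav ▸ h)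
  have hother : ∀ {a}, D.Adj u a ∧ D.Adj a v → φ a ≠ φ u := by
    rintro a ⟨hua, hav⟩ hcol_a
    refine hφ (φ u) u (.head ⟨⟨hua, fun h => hne_v hav h.2⟩, rfl, hcol_a⟩
      (.head' ⟨⟨hav, fun h => hne_u hua h.1⟩, hcol_a, hcol.symm⟩ hpath))
  intro w hcycle
  obtain ⟨-, ⟨-, hw, -⟩, -⟩ := TransGen.head'_iff.mp hcycle
  refine hφ (φ w) w (TransGen.mono (fun a b ⟨hab, ha, hb⟩ => ?_) _ _ hcycle)
  exact ⟨⟨hab, fun h => hne_u ha.1 h.1⟩, Fin.two_eq_of_ne_of_ne (hother ha) (hother hw),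
    Fin.two_eq_of_ne_of_ne (hother hb) (hother hw)⟩

end SimpleDigraph

instance : DecidableRel digraphO5.Adj := fun a b =>
  inferInstanceAs (Decidable ((a.val, b.val) ∈ _))

theorem dicritical3_O5_free_general
    {V : Type} (D : SimpleDigraph V) (hD : D.Dicritical3) :
    ¬ D.ContainsSub digraphO5 := by
  rintro ⟨f, -, hadj⟩
  have hx := And.intro (hadj 0 2 (by decide)) (hadj 2 1 (by decide))
  have hy := And.intro (hadj 0 3 (by decide)) (hadj 3 1 (by decide))
  have hz := And.intro (hadj 0 4 (by decide)) (hadj 4 1 (by decide))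
  exact hD.acyclicRel_between (hadj 0 1 (by decide)) (f 2)
    (.head ⟨hadj 2 3 (by decide), hx, hy⟩ (.head ⟨hadj 3 4 (by decide), hy, hz⟩
      (.single ⟨hadj 4 2 (by decide), hz, hx⟩)))

/-- A 3-dicritical digraph does not contain `O5` as a subdigraph. -/
theorem dicritical3_O5_free
    {V : Type} [Fintype V] (D : SimpleDigraph V) (hD : D.Dicritical3) :
    ¬ D.ContainsSub digraphO5 :=
  dicritical3_O5_free_general D hD
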